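/- Let G, Λ ∈ ℝ and define, on symmetric positive definite 3×3 matrices C, the second Piola–Kirchhoff stress of Becker's law S₂(C) = ( G·log(C) + (Λ/2)·tr(log C)·1 ) · C^(−1/2). Then S₂(1) = 0 and S₂ is Fréchet differentiable at C = 1 with derivative H ↦ G·H + (Λ/2)·tr(H)·1; equivalently, writing E = (C − 1)/2, one has S₂ = 2G·E + Λ·tr(E)·1 + o(‖E‖) as C → 1, so Becker's law is consistent with linear isotropic elasticity with Lamé constants G and Λ. -/

import Mathlib

/-!
On symmetric matrices both `S₂(C)` and the linearisation `G·(C - 1) + (Λ/2)·tr(C - 1)·1` are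
spectral functions `φ(C)` of `C` (the traces entering only as constants), so their difference is
`φ(C)` for one scalar function `φ`. By `log t = t - 1 + O((t - 1)²)` and
`t^(-1/2) = 1 + O(t - 1)`, `φ(λ) = O(ε²)` at every eigenvalue `λ` of `C`, where
`ε = ‖C - 1‖` bounds `|λ - 1|`. The Frobenius norm of `φ(C)` is the `ℓ²` norm of the values
`φ(λ)`, so the remainder is `O(‖C - 1‖²)`.
-/

open Matrix

attribute [local instance]
  Matrix.frobeniusNormedAddCommGroup Matrix.frobeniusNormedSpace

/-- The principal matrix logarithm of a symmetric (positive definite) matrix, obtained by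
applying the real logarithm to the eigenvalues in a spectral decomposition (junk value `0`
on non-Hermitian input). -/
noncomputable def matLog (A : Matrix (Fin 3) (Fin 3) ℝ) : Matrix (Fin 3) (Fin 3) ℝ :=
  if hA : A.IsHermitian then hA.cfc Real.log else 0

/-- `C^(−1/2)`: the inverse of the unique symmetric positive definite square root of `C`,
obtained by applying `t ↦ (√t)⁻¹` to the eigenvalues in a spectral decomposition (junk
value `0` on non-Hermitian input). -/
noncomputable def matInvSqrt (A : Matrix (Fin 3) (Fin 3) ℝ) : Matrix (Fin 3) (Fin 3) ℝ :=
  if hA : A.IsHermitian then hA.cfc (fun t => (Real.sqrt t)⁻¹) else 0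

/-- The second Piola–Kirchhoff stress of Becker's law:
`S₂(C) = (G·log C + (Λ/2)·tr(log C)·1)·C^(−1/2)`. -/
noncomputable def beckerS2 (G Lam : ℝ) (C : Matrix (Fin 3) (Fin 3) ℝ) :
    Matrix (Fin 3) (Fin 3) ℝ :=
  (G • matLog C + ((Lam / 2) * (matLog C).trace) • 1) * matInvSqrt C

namespace Real

theorem abs_log_sub_sub_one_le {t ε : ℝ} (hε : ε ≤ 1 / 2) (ht : |t - 1| ≤ ε) :
    |log t - (t - 1)| ≤ 2 * ε ^ 2 := by
  obtain ⟨hlo, hhi⟩ := abs_le.mp ht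
  have ht0 : 0 < t := by linarith
  have hupper : log t ≤ t - 1 := log_le_sub_one_of_pos ht0
  have hlower : -log t ≤ t⁻¹ - 1 := by
    simpa only [log_inv] using log_le_sub_one_of_pos (inv_pos.mpr ht0)
  have hinv : t * t⁻¹ = 1 := mul_inv_cancel₀ ht0.ne'
  have hsq : (t - 1) ^ 2 ≤ ε ^ 2 := sq_le_sq' hlo hhi
  rw [abs_le]
  constructor <;> nlinarith

theorem inv_sqrt_le_two {t : ℝ} (ht : 1 / 4 ≤ t) : (√t)⁻¹ ≤ 2 := by
  have : 1 / 2 ≤ √t := le_sqrt_of_sq_le (by linarith)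
  rw [inv_le_comm₀ (by linarith) two_pos]
  linarith

theorem abs_inv_sqrt_sub_one_le {t : ℝ} (ht : 1 / 2 ≤ t) : |(√t)⁻¹ - 1| ≤ |t - 1| := by
  have hs : 1 / 2 ≤ √t := le_sqrt_of_sq_le (by linarith)
  have hsq : √t ^ 2 = t := sq_sqrt (by linarith)
  have hden : 1 ≤ √t * (1 + √t) := by nlinarith
  have hquot : (√t)⁻¹ - 1 = -(t - 1) / (√t * (1 + √t)) := by
    field_simp
    nlinarith
  rw [hquot, abs_div, abs_neg, abs_of_pos (by linarith : (0 : ℝ) < √t * (1 + √t))]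
  exact div_le_self (abs_nonneg _) hden

end Real

theorem abs_mul_sub_le (a b r : ℝ) : |a * r - b| ≤ |a - b| * |r| + |b| * |r - 1| := by
  calc |a * r - b| = |(a - b) * r + b * (r - 1)| := by congr 1; ring
    _ ≤ |a - b| * |r| + |b| * |r - 1| := by
      rw [← abs_mul, ← abs_mul]; exact abs_add_le _ _

namespace Matrix

variable {m n 𝕜 : Type*} [Fintype m] [Fintype n] [RCLike 𝕜]

theorem frobenius_norm_sq_eq_re_trace (M : Matrix m n 𝕜) :
    ‖M‖ ^ 2 = RCLike.re (Mᴴ * M).trace := by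
  rw [frobenius_norm_def, ← Real.rpow_natCast, ← Real.rpow_mul (by positivity)]
  simp [trace, mul_apply, Finset.sum_comm (γ := m), RCLike.conj_mul]

theorem frobenius_norm_unitary_conj [DecidableEq n] (u : unitary (Matrix n n 𝕜))
    (M : Matrix n n 𝕜) : ‖(u : Matrix n n 𝕜) * M * star (u : Matrix n n 𝕜)‖ = ‖M‖ := by
  rw [← sq_eq_sq₀ (norm_nonneg _) (norm_nonneg _), frobenius_norm_sq_eq_re_trace,
    frobenius_norm_sq_eq_re_trace, ← star_eq_conjTranspose, ← star_eq_conjTranspose]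
  simp only [star_mul, star_star, mul_assoc]
  rw [← mul_assoc (star (u : Matrix n n 𝕜)) u, Unitary.star_mul_self_of_mem u.2, one_mul,
    trace_mul_comm, mul_assoc, mul_assoc, Unitary.star_mul_self_of_mem u.2, mul_one]

variable [DecidableEq n]

theorem continuousOn_spectrum_real (A : Matrix n n 𝕜) (f : ℝ → ℝ) :
    ContinuousOn f (spectrum ℝ A) :=
  A.finite_real_spectrum.continuousOn f

namespace IsHermitian

variable {A : Matrix n n 𝕜} (hA : A.IsHermitian)
include hA

theorem trace_cfc (f : ℝ → ℝ) : (cfc f A).trace = ∑ i, (f (hA.eigenvalues i) : 𝕜) := by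
  rw [hA.cfc_eq, IsHermitian.cfc, Unitary.conjStarAlgAut_apply, trace_mul_cycle,
    Unitary.star_mul_self_of_mem (SetLike.coe_mem _), one_mul, trace_diagonal]
  rfl

theorem frobenius_norm_cfc (f : ℝ → ℝ) : ‖cfc f A‖ = √(∑ i, f (hA.eigenvalues i) ^ 2) := by
  rw [hA.cfc_eq, IsHermitian.cfc, Unitary.conjStarAlgAut_apply, frobenius_norm_unitary_conj,
    frobenius_norm_diagonal, EuclideanSpace.norm_eq]
  simp

theorem abs_le_frobenius_norm_cfc (f : ℝ → ℝ) (i : n) : |f (hA.eigenvalues i)| ≤ ‖cfc f A‖ := by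
  rw [hA.frobenius_norm_cfc, ← Real.sqrt_sq_eq_abs]
  exact Real.sqrt_le_sqrt <|
    Finset.single_le_sum (fun j _ => sq_nonneg (f (hA.eigenvalues j))) (Finset.mem_univ i)

theorem frobenius_norm_cfc_le_sum (f : ℝ → ℝ) : ‖cfc f A‖ ≤ ∑ i, |f (hA.eigenvalues i)| := by
  rw [hA.frobenius_norm_cfc]
  refine Real.sqrt_le_iff.mpr ⟨by positivity, ?_⟩
  simpa only [sq_abs] using
    Finset.sum_sq_le_sq_sum_of_nonneg (fun i _ => abs_nonneg (f (hA.eigenvalues i)))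

theorem cfc_sub_one : cfc (fun t : ℝ => t - 1) A = A - 1 := by
  rw [cfc_sub (fun t => t) (fun _ => 1), cfc_id' ℝ A, cfc_const_one ℝ A]

theorem abs_eigenvalues_sub_one_le (i : n) : |hA.eigenvalues i - 1| ≤ ‖A - 1‖ :=
  hA.cfc_sub_one ▸ hA.abs_le_frobenius_norm_cfc (fun t => t - 1) i

end IsHermitian

end Matrix

section Hooke

variable {n : Type*} [Fintype n] [DecidableEq n]

/-- Hooke's law `2G·E + Λ·tr(E)·1` of linear isotropic elasticity, as a function of
`H = C - 1 = 2E`. -/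
noncomputable def hookeLaw (G Lam : ℝ) : Matrix n n ℝ →L[ℝ] Matrix n n ℝ :=
  G • ContinuousLinearMap.id ℝ _ +
    (Lam / 2) • (traceLinearMap n ℝ ℝ).toContinuousLinearMap.smulRight 1

@[simp]
theorem hookeLaw_apply (G Lam : ℝ) (H : Matrix n n ℝ) :
    hookeLaw G Lam H = G • H + ((Lam / 2) * H.trace) • 1 := by
  simp [hookeLaw, smul_smul]

theorem hookeLaw_sub_one_eq_cfc (G Lam : ℝ) {C : Matrix n n ℝ} (hC : C.IsHermitian) :
    hookeLaw G Lam (C - 1) = cfc (fun t => G * (t - 1) + Lam / 2 * (C - 1).trace) C := by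
  have hcont := C.continuousOn_spectrum_real
  rw [cfc_add_const _ _ C (hcont _) hC.isSelfAdjoint, cfc_const_mul _ _ C (hcont _),
    hC.cfc_sub_one, hookeLaw_apply, Algebra.algebraMap_eq_smul_one]

end Hooke

theorem matLog_eq_cfc {C : Matrix (Fin 3) (Fin 3) ℝ} (hC : C.IsHermitian) :
    matLog C = cfc Real.log C := by
  rw [matLog, dif_pos hC, hC.cfc_eq]

theorem matInvSqrt_eq_cfc {C : Matrix (Fin 3) (Fin 3) ℝ} (hC : C.IsHermitian) :
    matInvSqrt C = cfc (fun t => (√t)⁻¹) C := by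
  rw [matInvSqrt, dif_pos hC, hC.cfc_eq]

theorem beckerS2_one (G Lam : ℝ) : beckerS2 G Lam 1 = 0 := by
  simp [beckerS2, matLog_eq_cfc isHermitian_one]

theorem beckerS2_eq_cfc (G Lam : ℝ) {C : Matrix (Fin 3) (Fin 3) ℝ} (hC : C.IsHermitian) :
    beckerS2 G Lam C =
      cfc (fun t => (G * Real.log t + Lam / 2 * (matLog C).trace) * (√t)⁻¹) C := by
  have hcont := C.continuousOn_spectrum_real
  rw [cfc_mul _ _ C (hcont _) (hcont _), cfc_add_const _ _ C (hcont _),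
    cfc_const_mul _ _ C (hcont _), beckerS2, ← matLog_eq_cfc hC, ← matInvSqrt_eq_cfc hC,
    Algebra.algebraMap_eq_smul_one]

theorem abs_becker_sub_hooke_le {G Lam S T t ε : ℝ} (hε : ε ≤ 1 / 2) (ht : |t - 1| ≤ ε)
    (hST : |S - T| ≤ 6 * ε ^ 2) (hT : |T| ≤ 3 * ε) :
    |(G * Real.log t + Lam / 2 * S) * (√t)⁻¹ - (G * (t - 1) + Lam / 2 * T)|
      ≤ 8 * (|G| + |Lam|) * ε ^ 2 := by
  have ht2 : 1 / 2 ≤ t := by linarith [(abs_le.mp ht).1]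
  set r := (√t)⁻¹
  have hr : |r| ≤ 2 := by
    rw [abs_of_nonneg (by positivity)]; exact Real.inv_sqrt_le_two (by linarith)
  have hr1 : |r - 1| ≤ ε := (Real.abs_inv_sqrt_sub_one_le ht2).trans ht
  have hlog : |Real.log t - (t - 1)| ≤ 2 * ε ^ 2 := Real.abs_log_sub_sub_one_le hε ht
  have hGpart : |Real.log t * r - (t - 1)| ≤ 5 * ε ^ 2 := by
    refine (abs_mul_sub_le _ _ _).trans ?_
    nlinarith [abs_nonneg (Real.log t - (t - 1)), abs_nonneg (r - 1), abs_nonneg (t - 1)]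
  have hLpart : |S * r - T| ≤ 15 * ε ^ 2 := by
    refine (abs_mul_sub_le _ _ _).trans ?_
    nlinarith [abs_nonneg (S - T), abs_nonneg (r - 1), abs_nonneg T]
  calc |(G * Real.log t + Lam / 2 * S) * r - (G * (t - 1) + Lam / 2 * T)|
      = |G * (Real.log t * r - (t - 1)) + Lam / 2 * (S * r - T)| := by congr 1; ring
    _ ≤ |G| * (5 * ε ^ 2) + |Lam| / 2 * (15 * ε ^ 2) := by
      refine (abs_add_le _ _).trans (add_le_add ?_ ?_)
      · rw [abs_mul]; gcongr
      · rw [abs_mul, abs_div, abs_two]; gcongr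
    _ ≤ 8 * (|G| + |Lam|) * ε ^ 2 := by
      nlinarith [abs_nonneg G, abs_nonneg Lam, sq_nonneg ε]

theorem norm_beckerS2_sub_hookeLaw_le (G Lam : ℝ) {C : Matrix (Fin 3) (Fin 3) ℝ}
    (hC : C.IsHermitian) (hC1 : ‖C - 1‖ ≤ 1 / 2) :
    ‖beckerS2 G Lam C - hookeLaw G Lam (C - 1)‖ ≤ 24 * (|G| + |Lam|) * ‖C - 1‖ ^ 2 := by
  set ε := ‖C - 1‖
  set ev := hC.eigenvalues
  have hev : ∀ i, |ev i - 1| ≤ ε := hC.abs_eigenvalues_sub_one_le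
  have hS : (matLog C).trace = ∑ i, Real.log (ev i) := by
    rw [matLog_eq_cfc hC, hC.trace_cfc]; rfl
  have hT : (C - 1).trace = ∑ i, (ev i - 1) := by
    rw [← hC.cfc_sub_one, hC.trace_cfc]; rfl
  have hST : |(matLog C).trace - (C - 1).trace| ≤ 6 * ε ^ 2 := by
    rw [hS, hT, ← Finset.sum_sub_distrib]
    calc |∑ i, (Real.log (ev i) - (ev i - 1))|
        ≤ ∑ i, |Real.log (ev i) - (ev i - 1)| := Finset.abs_sum_le_sum_abs _ _
      _ ≤ ∑ _i : Fin 3, 2 * ε ^ 2 := Finset.sum_le_sum fun i _ =>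
          Real.abs_log_sub_sub_one_le hC1 (hev i)
      _ = 6 * ε ^ 2 := by
        simp only [Finset.sum_const, Finset.card_univ, Fintype.card_fin, nsmul_eq_mul]; ring
  have hTε : |(C - 1).trace| ≤ 3 * ε := by
    rw [hT]
    calc |∑ i, (ev i - 1)| ≤ ∑ i, |ev i - 1| := Finset.abs_sum_le_sum_abs _ _
      _ ≤ ∑ _i : Fin 3, ε := Finset.sum_le_sum fun i _ => hev i
      _ = 3 * ε := by simp
  have hcont := C.continuousOn_spectrum_real
  rw [beckerS2_eq_cfc G Lam hC, hookeLaw_sub_one_eq_cfc G Lam hC, ← cfc_sub _ _ C (hcont _)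
    (hcont _)]
  calc _ ≤ _ := hC.frobenius_norm_cfc_le_sum _
    _ ≤ ∑ _i : Fin 3, 8 * (|G| + |Lam|) * ε ^ 2 := Finset.sum_le_sum fun i _ =>
        abs_becker_sub_hooke_le hC1 (hev i) hST hTε
    _ = 24 * (|G| + |Lam|) * ε ^ 2 := by
      simp only [Finset.sum_const, Finset.card_univ, Fintype.card_fin, nsmul_eq_mul]; ring

open Filter Topology Asymptotics

theorem isBigO_beckerS2_sub_hookeLaw (G Lam : ℝ) :
    (fun C => beckerS2 G Lam C - hookeLaw G Lam (C - 1))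
      =O[𝓝[{C | C.IsHermitian}] 1] fun C => ‖C - 1‖ ^ 2 := by
  refine IsBigO.of_bound (24 * (|G| + |Lam|)) ?_
  filter_upwards [self_mem_nhdsWithin,
    nhdsWithin_le_nhds (Metric.closedBall_mem_nhds (1 : Matrix (Fin 3) (Fin 3) ℝ) one_half_pos)]
    with C hC hC1
  rw [norm_pow, norm_norm]
  exact norm_beckerS2_sub_hookeLaw_le G Lam hC (mem_closedBall_iff_norm.mp hC1)

/-- For all `G, Λ`, Becker's second Piola–Kirchhoff stress
`S₂(C) = (G·log C + (Λ/2)·tr(log C)·1)·C^(−1/2)` satisfies `S₂(1) = 0` and is Fréchet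
differentiable at `C = 1` (within the symmetric positive definite matrices, with respect
to the Frobenius norm) with derivative `H ↦ G·H + (Λ/2)·tr(H)·1`; i.e. Becker's law is
consistent with linear isotropic elasticity with Lamé constants `G` and `Λ`. -/
theorem becker_consistent_with_linear_elasticity (G Lam : ℝ) :
    beckerS2 G Lam 1 = 0
    ∧ ∃ L : Matrix (Fin 3) (Fin 3) ℝ →L[ℝ] Matrix (Fin 3) (Fin 3) ℝ,
        (∀ H : Matrix (Fin 3) (Fin 3) ℝ, L H = G • H + ((Lam / 2) * H.trace) • 1) ∧
        HasFDerivWithinAt (beckerS2 G Lam) L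
          {C : Matrix (Fin 3) (Fin 3) ℝ | C.PosDef} 1 := by
  refine ⟨beckerS2_one G Lam, hookeLaw G Lam, hookeLaw_apply G Lam, ?_⟩
  refine hasFDerivWithinAt_iff_isLittleO.mpr ?_
  simp only [beckerS2_one, sub_zero]
  have hsq : (fun C : Matrix (Fin 3) (Fin 3) ℝ => ‖C - 1‖ ^ 2) =o[𝓝 1] fun C => C - 1 :=
    (isLittleO_norm_pow_id one_lt_two).comp_tendsto (tendsto_sub_nhds_zero_iff.mpr tendsto_id)
  exact ((isBigO_beckerS2_sub_hookeLaw G Lam).mono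
    (nhdsWithin_mono _ fun C hC => hC.isHermitian)).trans_isLittleO
    (hsq.mono nhdsWithin_le_nhds)
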